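/- Let u ∈ ℝ^H be nonzero, Δ = a·u + b with ⟨u,b⟩ = 0 and 1 + a > 0, and suppose ‖b‖₂ ≥ ρ‖Δ‖₂ for some ρ ∈ (0,1]. Let c = cos(u, u + Δ) and assume c > 0. Then ‖Δ‖₂/‖u‖₂ ≤ ((1+a)/ρ)·√(1/c² − 1). -/

import Mathlib

/-!
Since `b ⟂ u`, the vectors `(1 + a) • u`, `b` and `u + Δ = (1 + a) • u + b` form a right triangle,
and `c` is the cosine of its angle at `u`. Hence `√(1 / c² - 1)` is the tangent of that angle,
`‖b‖ / ((1 + a) ‖u‖)`, and the bound follows from `ρ ‖Δ‖ ≤ ‖b‖`.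
-/

open Real InnerProductGeometry
open scoped RealInnerProductSpace

noncomputable def cosSim {H : ℕ} (x y : EuclideanSpace ℝ (Fin H)) : ℝ :=
  (inner ℝ x y : ℝ) / (‖x‖ * ‖y‖)

theorem cosSim_eq_cos_angle {H : ℕ} (x y : EuclideanSpace ℝ (Fin H)) :
    cosSim x y = cos (angle x y) :=
  (cos_angle x y).symm

theorem Real.sqrt_one_div_cos_sq_sub_one {x : ℝ} (hx₀ : 0 ≤ x) (hx : x < π / 2) :
    √(1 / cos x ^ 2 - 1) = tan x := by
  have hcos : 0 < cos x := cos_pos_of_mem_Ioo ⟨by linarith [pi_pos], hx⟩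
  have htan : 1 / cos x ^ 2 - 1 = tan x ^ 2 := by
    rw [one_div, ← inv_one_add_tan_sq hcos.ne', inv_inv, add_sub_cancel_left]
  rw [htan, sqrt_sq (tan_nonneg_of_nonneg_of_le_pi_div_two hx₀ hx.le)]

theorem sqrt_one_div_cos_sq_angle_add_sub_one_of_inner_eq_zero {V : Type*}
    [NormedAddCommGroup V] [InnerProductSpace ℝ V] {x y : V} (h : ⟪x, y⟫ = 0) (hx : x ≠ 0) :
    √(1 / cos (angle x (x + y)) ^ 2 - 1) = ‖y‖ / ‖x‖ := by
  rw [sqrt_one_div_cos_sq_sub_one (angle_nonneg _ _)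
    (angle_add_lt_pi_div_two_of_inner_eq_zero h hx), tan_angle_add_of_inner_eq_zero h]

theorem relative_step_from_cosine_general {H : ℕ}
    (u b : EuclideanSpace ℝ (Fin H)) (a ρ : ℝ)
    (hu : u ≠ 0) (hab : (1 : ℝ) + a > 0)
    (horth : (inner ℝ u b : ℝ) = 0)
    (hρ : 0 < ρ)
    (Δ : EuclideanSpace ℝ (Fin H)) (hΔ : Δ = a • u + b)
    (hperp : ‖b‖ ≥ ρ * ‖Δ‖) :
    ‖Δ‖ / ‖u‖ ≤ ((1 + a) / ρ) *
      Real.sqrt (1 / (cosSim u (u + Δ)) ^ 2 - 1) := by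
  have hu₀ : 0 < ‖u‖ := norm_pos_iff.mpr hu
  have hsplit : u + Δ = (1 + a) • u + b := by rw [hΔ]; module
  have horth' : ⟪(1 + a) • u, b⟫ = 0 := by rw [real_inner_smul_left, horth, mul_zero]
  have htan : √(1 / cosSim u (u + Δ) ^ 2 - 1) = ‖b‖ / ((1 + a) * ‖u‖) := by
    rw [cosSim_eq_cos_angle, hsplit, ← angle_smul_left_of_pos u _ hab,
      sqrt_one_div_cos_sq_angle_add_sub_one_of_inner_eq_zero horth' (smul_ne_zero hab.ne' hu),
      norm_smul, norm_of_nonneg hab.le]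
  calc ‖Δ‖ / ‖u‖ ≤ ‖b‖ / (ρ * ‖u‖) := by
        rw [div_le_div_iff₀ hu₀ (by positivity)]
        nlinarith
    _ = (1 + a) / ρ * (‖b‖ / ((1 + a) * ‖u‖)) := by field_simp
    _ = (1 + a) / ρ * √(1 / cosSim u (u + Δ) ^ 2 - 1) := by rw [htan]

theorem relative_step_from_cosine {H : ℕ}
    (u b : EuclideanSpace ℝ (Fin H)) (a ρ : ℝ)
    (hu : u ≠ 0) (hab : (1 : ℝ) + a > 0)
    (horth : (inner ℝ u b : ℝ) = 0)
    (hρ : 0 < ρ) (hρ1 : ρ ≤ 1)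
    (Δ : EuclideanSpace ℝ (Fin H)) (hΔ : Δ = a • u + b)
    (hperp : ‖b‖ ≥ ρ * ‖Δ‖)
    (hc : cosSim u (u + Δ) > 0) :
    ‖Δ‖ / ‖u‖ ≤ ((1 + a) / ρ) *
      Real.sqrt (1 / (cosSim u (u + Δ)) ^ 2 - 1) :=
  relative_step_from_cosine_general u b a ρ hu hab horth hρ Δ hΔ hperp
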